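/- Let μ₀ > 0, let a : ℝ → ℝ be twice continuously differentiable with a, a', a'' bounded and a(x) ≥ μ₀ for all x, and let b : ℝ → ℝ be continuously differentiable with b, b' bounded. Set β := (1/2)(sup_{x∈ℝ}|a''(x)| + sup_{x∈ℝ}|b'(x)|). Then for every φ ∈ 𝒮(ℝ): ∫ (−a(x)φ'''(x) + b(x)φ''(x))·φ'(x) dx ≥ μ₀·‖φ''‖_{L²}² − β·‖φ'‖_{L²}². -/

import Mathlib

/-!
Put `ψ = φ'`. Integrating by parts, `∫ (-a ψ'' + b ψ') ψ = ∫ a ψ'² + ∫ (a' + b) ψ ψ'`, and since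
`2 ψ ψ' = (ψ²)'`, a second integration by parts turns the last integral into `-½ ∫ (a'' + b') ψ²`.
The bounds `a ≥ μ₀` and `½ (a'' + b') ≤ β` then give the estimate.
-/

open MeasureTheory SchwartzMap

/-- `‖u‖_{L²} := (∫ u²)^{1/2}`. -/
noncomputable def L2norm (u : ℝ → ℝ) : ℝ := Real.sqrt (∫ x, u x ^ 2)

theorem L2norm_sq (u : ℝ → ℝ) : L2norm u ^ 2 = ∫ x, u x * u x := by
  rw [L2norm, Real.sq_sqrt (integral_nonneg fun x => sq_nonneg _)]
  simp only [sq]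

theorem le_ciSup_abs {f : ℝ → ℝ} (hf : ∃ C, ∀ x, |f x| ≤ C) (x : ℝ) : f x ≤ ⨆ y, |f y| := by
  obtain ⟨C, hC⟩ := hf
  exact (le_abs_self _).trans (le_ciSup ⟨C, by rintro _ ⟨y, rfl⟩; exact hC y⟩ x)

namespace SchwartzMap

theorem coe_derivCLM (ψ : 𝓢(ℝ, ℝ)) : ⇑(derivCLM ℝ ℝ ψ) = deriv ψ :=
  funext (derivCLM_apply ℝ ψ)

theorem integrable_mul_mul {c : ℝ → ℝ} (hc : Continuous c) (hcb : ∃ C, ∀ x, |c x| ≤ C)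
    (ψ χ : 𝓢(ℝ, ℝ)) : Integrable fun x => c x * (ψ x * χ x) := by
  obtain ⟨C, hC⟩ := hcb
  refine Integrable.bdd_mul ?_ hc.aestronglyMeasurable (.of_forall fun x => (hC x : ‖c x‖ ≤ C))
  exact χ.integrable.bdd_mul ψ.continuous.aestronglyMeasurable
    (.of_forall fun x => norm_le_seminorm ℝ ψ x)

theorem integral_deriv_mul_mul_add {c : ℝ → ℝ} (hc : ContDiff ℝ 1 c)
    (hc0 : ∃ C, ∀ x, |c x| ≤ C) (hc1 : ∃ C, ∀ x, |deriv c x| ≤ C) (ψ χ : 𝓢(ℝ, ℝ)) :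
    (∫ x, deriv c x * (ψ x * χ x)) + (∫ x, c x * (deriv ψ x * χ x))
      + ∫ x, c x * (ψ x * deriv χ x) = 0 := by
  have i1 := integrable_mul_mul (hc.continuous_deriv le_rfl) hc1 ψ χ
  have i2 := integrable_mul_mul hc.continuous hc0 (derivCLM ℝ ℝ ψ) χ
  have i3 := integrable_mul_mul hc.continuous hc0 ψ (derivCLM ℝ ℝ χ)
  rw [coe_derivCLM] at i2 i3
  have hderiv : ∀ x, HasDerivAt (fun x => c x * (ψ x * χ x))
      (deriv c x * (ψ x * χ x) + c x * (deriv ψ x * χ x) + c x * (ψ x * deriv χ x)) x :=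
    fun x => ((hc.differentiable one_ne_zero x).hasDerivAt.mul
      ((ψ.hasDerivAt x).mul (χ.hasDerivAt x))).congr_deriv (by rw [Pi.mul_apply]; ring)
  have i12 : Integrable fun x => deriv c x * (ψ x * χ x) + c x * (deriv ψ x * χ x) := i1.add i2
  have h := integral_eq_zero_of_hasDerivAt_of_integrable hderiv (i12.add i3)
    (integrable_mul_mul hc.continuous hc0 ψ χ)
  rwa [integral_add i12 i3, integral_add i1 i2] at h

theorem integral_mul_deriv_mul_self {c : ℝ → ℝ} (hc : ContDiff ℝ 1 c)
    (hc0 : ∃ C, ∀ x, |c x| ≤ C) (hc1 : ∃ C, ∀ x, |deriv c x| ≤ C) (ψ : 𝓢(ℝ, ℝ)) :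
    ∫ x, c x * (deriv ψ x * ψ x) = -(1 / 2) * ∫ x, deriv c x * (ψ x * ψ x) := by
  have h := integral_deriv_mul_mul_add hc hc0 hc1 ψ ψ
  simp only [mul_comm (ψ _) (deriv ψ _)] at h
  linarith

theorem integral_mul_mul_self_mono {c d : ℝ → ℝ} (hc : Continuous c) (hc0 : ∃ C, ∀ x, |c x| ≤ C)
    (hd : Continuous d) (hd0 : ∃ C, ∀ x, |d x| ≤ C) (hcd : ∀ x, c x ≤ d x) (ψ : 𝓢(ℝ, ℝ)) :
    ∫ x, c x * (ψ x * ψ x) ≤ ∫ x, d x * (ψ x * ψ x) :=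
  integral_mono (integrable_mul_mul hc hc0 ψ ψ) (integrable_mul_mul hd hd0 ψ ψ)
    fun x => mul_le_mul_of_nonneg_right (hcd x) (mul_self_nonneg _)

end SchwartzMap

noncomputable def secondOrderOp (a b ψ : ℝ → ℝ) (x : ℝ) : ℝ :=
  -a x * deriv (deriv ψ) x + b x * deriv ψ x

theorem integral_secondOrderOp_mul_self {a b : ℝ → ℝ} (ha : ContDiff ℝ 2 a)
    (ha0 : ∃ C, ∀ x, |a x| ≤ C) (ha1 : ∃ C, ∀ x, |deriv a x| ≤ C)
    (ha2 : ∃ C, ∀ x, |deriv (deriv a) x| ≤ C) (hb : ContDiff ℝ 1 b)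
    (hb0 : ∃ C, ∀ x, |b x| ≤ C) (hb1 : ∃ C, ∀ x, |deriv b x| ≤ C) (ψ : 𝓢(ℝ, ℝ)) :
    ∫ x, secondOrderOp a b ψ x * ψ x = (∫ x, a x * (deriv ψ x * deriv ψ x))
      - (1 / 2) * ∫ x, (deriv (deriv a) x + deriv b x) * (ψ x * ψ x) := by
  set ψ₁ := derivCLM ℝ ℝ ψ
  set ψ₂ := derivCLM ℝ ℝ ψ₁
  have hψ₁ : deriv ψ = ψ₁ := (coe_derivCLM ψ).symm
  have hψ₂ : deriv ψ₁ = ψ₂ := (coe_derivCLM ψ₁).symm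
  have hda : ContDiff ℝ 1 (deriv a) := ha.deriv'
  have hibp := integral_deriv_mul_mul_add (ha.of_le one_le_two) ha0 ha1 ψ₁ ψ
  have hA := integral_mul_deriv_mul_self hda ha1 ha2 ψ
  have hB := integral_mul_deriv_mul_self hb hb0 hb1 ψ
  rw [hψ₂] at hibp
  rw [hψ₁] at hibp hA hB ⊢
  have hsplit : ∫ x, secondOrderOp a b ψ x * ψ x
      = -(∫ x, a x * (ψ₂ x * ψ x)) + ∫ x, b x * (ψ₁ x * ψ x) := by
    have i₂ : Integrable fun x => -(a x * (ψ₂ x * ψ x)) :=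
      (integrable_mul_mul ha.continuous ha0 ψ₂ ψ).neg
    rw [← integral_neg, ← integral_add i₂ (integrable_mul_mul hb.continuous hb0 ψ₁ ψ)]
    refine integral_congr_ae (.of_forall fun x => ?_)
    simp only [secondOrderOp, hψ₁, hψ₂]
    ring
  have hsum : ∫ x, (deriv (deriv a) x + deriv b x) * (ψ x * ψ x)
      = (∫ x, deriv (deriv a) x * (ψ x * ψ x)) + ∫ x, deriv b x * (ψ x * ψ x) := by
    simp only [add_mul]
    exact integral_add (integrable_mul_mul (hda.continuous_deriv le_rfl) ha2 ψ ψ)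
      (integrable_mul_mul (hb.continuous_deriv le_rfl) hb1 ψ ψ)
  rw [hsplit, hsum]
  linarith

theorem stmt_6_general (μ₀ : ℝ) (a b : ℝ → ℝ)
    (ha : ContDiff ℝ 2 a)
    (ha0 : ∃ C, ∀ x, |a x| ≤ C)
    (ha1 : ∃ C, ∀ x, |deriv a x| ≤ C)
    (ha2 : ∃ C, ∀ x, |deriv (deriv a) x| ≤ C)
    (halb : ∀ x, μ₀ ≤ a x)
    (hb : ContDiff ℝ 1 b)
    (hb0 : ∃ C, ∀ x, |b x| ≤ C)
    (hb1 : ∃ C, ∀ x, |deriv b x| ≤ C)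
    (β : ℝ)
    (hβ : β = (1 / 2) * ((⨆ x : ℝ, |deriv (deriv a) x|) + ⨆ x : ℝ, |deriv b x|))
    (φ : 𝓢(ℝ, ℝ)) :
    ∫ x, (-a x * deriv (deriv (deriv φ)) x + b x * deriv (deriv φ) x)
        * deriv (φ : ℝ → ℝ) x ≥
      μ₀ * L2norm (deriv (deriv φ)) ^ 2 - β * L2norm (deriv (φ : ℝ → ℝ)) ^ 2 := by
  set ψ := derivCLM ℝ ℝ φ
  have hψ : deriv (φ : ℝ → ℝ) = ψ := (coe_derivCLM φ).symm
  have hidentity := integral_secondOrderOp_mul_self ha ha0 ha1 ha2 hb hb0 hb1 ψ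
  simp only [secondOrderOp] at hidentity
  rw [hψ, ge_iff_le, hidentity, L2norm_sq, L2norm_sq]
  have hda2 : Continuous (deriv (deriv a)) := (ha.deriv' (n := 1)).continuous_deriv le_rfl
  have hdb : Continuous (deriv b) := hb.continuous_deriv le_rfl
  have ha_ge : μ₀ * ∫ x, deriv ψ x * deriv ψ x ≤ ∫ x, a x * (deriv ψ x * deriv ψ x) := by
    rw [← integral_const_mul, ← coe_derivCLM]
    exact integral_mul_mul_self_mono continuous_const ⟨|μ₀|, fun _ => le_rfl⟩ ha.continuous ha0
      halb _
  have hcoeff_le :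
      ∫ x, (deriv (deriv a) x + deriv b x) * (ψ x * ψ x) ≤ 2 * β * ∫ x, ψ x * ψ x := by
    rw [← integral_const_mul]
    refine integral_mul_mul_self_mono (hda2.add hdb) ?_ continuous_const ⟨|2 * β|, fun _ => le_rfl⟩
      (fun x => ?_) ψ
    · obtain ⟨C₁, hC₁⟩ := ha2
      obtain ⟨C₂, hC₂⟩ := hb1
      exact ⟨C₁ + C₂, fun x => (abs_add_le _ _).trans (add_le_add (hC₁ x) (hC₂ x))⟩
    · rw [Pi.add_apply, hβ]
      linarith [le_ciSup_abs ha2 x, le_ciSup_abs hb1 x]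
  linarith

/-- Estimates (A.10) in the proof of the Regularity Lemma B.3:
`⟨A(t)φ', φ'⟩ ≥ μ₀‖φ''‖² − β‖φ'‖²` where `A(t)ψ = −aψ'' + bψ'` and
`β = (1/2)(sup |a''| + sup |b'|)`. -/
theorem stmt_6 (μ₀ : ℝ) (hμ₀ : 0 < μ₀) (a b : ℝ → ℝ)
    (ha : ContDiff ℝ 2 a)
    (ha0 : ∃ C, ∀ x, |a x| ≤ C)
    (ha1 : ∃ C, ∀ x, |deriv a x| ≤ C)
    (ha2 : ∃ C, ∀ x, |deriv (deriv a) x| ≤ C)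
    (halb : ∀ x, μ₀ ≤ a x)
    (hb : ContDiff ℝ 1 b)
    (hb0 : ∃ C, ∀ x, |b x| ≤ C)
    (hb1 : ∃ C, ∀ x, |deriv b x| ≤ C)
    (β : ℝ)
    (hβ : β = (1 / 2) * ((⨆ x : ℝ, |deriv (deriv a) x|) + ⨆ x : ℝ, |deriv b x|))
    (φ : 𝓢(ℝ, ℝ)) :
    ∫ x, (-a x * deriv (deriv (deriv φ)) x + b x * deriv (deriv φ) x)
        * deriv (φ : ℝ → ℝ) x ≥
      μ₀ * L2norm (deriv (deriv φ)) ^ 2 - β * L2norm (deriv (φ : ℝ → ℝ)) ^ 2 :=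
  stmt_6_general μ₀ a b ha ha0 ha1 ha2 halb hb hb0 hb1 β hβ φ
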